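/- arXiv:2007.00057 — 3 statements merged into one kernel-verified Lean document; each statement's English description precedes it below -/
import Mathlib

section
/- For all k ≥ 1 and ℓ ≥ 1, there are only finitely many k-vertex-critical (P_2 + ℓP_1)-free graphs (up to isomorphism); equivalently, there is a bound N(k, ℓ) such that every such graph has at most N(k, ℓ) vertices. -/
open SimpleGraph

/-- `G` is `k`-vertex-critical: `χ(G) = k` and deleting any vertex decreases `χ`. -/
def IsKVertexCritical {V : Type*} (G : SimpleGraph V) (k : ℕ) : Prop :=
  G.chromaticNumber = k ∧ ∀ v : V, (G.induce ({v}ᶜ : Set V)).chromaticNumber < k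

/-- `G` has no induced subgraph isomorphic to `H`. -/
def InducedFree {V W : Type*} (G : SimpleGraph V) (H : SimpleGraph W) : Prop :=
  ∀ s : Set V, IsEmpty (G.induce s ≃g H)

/-- `s` is an independent set of `G`. -/
def IsIndepSet {V : Type*} (G : SimpleGraph V) (s : Set V) : Prop :=
  s.Pairwise fun a b => ¬ G.Adj a b

/-- The graph `P_2 + ℓ P_1`: an edge together with `ℓ` isolated vertices. -/
def P2lP1 (ℓ : ℕ) : SimpleGraph (Fin (ℓ + 2)) := fromEdgeSet {s(0, 1)}

/-- The graph `P_3 + P_1`: a path on three vertices plus an isolated vertex. -/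
def P3P1 : SimpleGraph (Fin 4) := fromEdgeSet {s(0, 1), s(1, 2)}

/-- The paw: a triangle with a pendant vertex. -/
def paw : SimpleGraph (Fin 4) := fromEdgeSet {s(0, 1), s(0, 2), s(1, 2), s(2, 3)}

/-- The join of two graphs: all edges between the two sides are added. -/
def joinG {α β : Type*} (G : SimpleGraph α) (H : SimpleGraph β) : SimpleGraph (α ⊕ β) where
  Adj x y :=
    match x, y with
    | Sum.inl a, Sum.inl b => G.Adj a b
    | Sum.inr a, Sum.inr b => H.Adj a b
    | Sum.inl _, Sum.inr _ => True
    | Sum.inr _, Sum.inl _ => True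
  symm := by
    constructor
    rintro (a | a) (b | b) h
    · exact G.adj_symm h
    · trivial
    · trivial
    · exact H.adj_symm h
  loopless := by
    constructor
    rintro (a | a) h
    · exact G.irrefl h
    · exact H.irrefl h

/-! Fix a vertex `v` of an independent set `S` and a `(k - 1)`-colouring of `G - v`. Since `G` is
not `(k - 1)`-colourable, every colour class contains a neighbour `a` of `v`; the edge `va`
together with `ℓ` vertices of `S - v` of that colour would induce `P₂ + ℓP₁`. So every colour
class meets `S - v` in fewer than `ℓ` vertices and `|S| ≤ (k - 1)(ℓ - 1) + 1`. A `k`-colouring of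
`G` splits `V` into `k` independent sets, which bounds `|V|`. -/
namespace P2lP1

variable {ℓ : ℕ}

@[simp] lemma adj_zero_one : (P2lP1 ℓ).Adj 0 1 := by
  simp [P2lP1]

@[simp] lemma adj_one_zero : (P2lP1 ℓ).Adj 1 0 := adj_zero_one.symm

@[simp] lemma not_adj_succ_succ_left (i : Fin ℓ) (j : Fin (ℓ + 2)) :
    ¬ (P2lP1 ℓ).Adj i.succ.succ j := by
  rw [P2lP1, fromEdgeSet_adj, Set.mem_singleton_iff, Sym2.eq_iff, ← Fin.succ_zero_eq_one]
  rintro ⟨⟨h0, -⟩ | ⟨h1, -⟩, -⟩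
  · exact Fin.succ_ne_zero _ h0
  · exact Fin.succ_ne_zero _ (Fin.succ_injective _ h1)

@[simp] lemma not_adj_succ_succ_right (i : Fin (ℓ + 2)) (j : Fin ℓ) :
    ¬ (P2lP1 ℓ).Adj i j.succ.succ := fun h => not_adj_succ_succ_left j i h.symm

end P2lP1

lemma InducedFree.not_isIndContained {V W : Type*} {G : SimpleGraph V} {H : SimpleGraph W}
    (hG : InducedFree G H) : ¬ H ⊴ G :=
  fun ⟨f⟩ => (hG _).false f.isoInduceRange.symm

lemma P2lP1.isIndContained_of_adj {V : Type*} {G : SimpleGraph V} {ℓ : ℕ} {v a : V}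
    (hva : G.Adj v a) (u : Fin ℓ ↪ V) (hu : ∀ i j, ¬ G.Adj (u i) (u j)) (hv : ∀ i, ¬ G.Adj v (u i))
    (ha : ∀ i, ¬ G.Adj a (u i)) : P2lP1 ℓ ⊴ G := by
  have hv' i : ¬ G.Adj (u i) v := fun h => hv i h.symm
  have ha' i : ¬ G.Adj (u i) a := fun h => ha i h.symm
  let f : Fin (ℓ + 2) → V := Fin.cons v (Fin.cons a u)
  have hf : f.Injective := by
    refine Fin.cons_injective_iff.2 ⟨?_, Fin.cons_injective_iff.2 ⟨?_, u.injective⟩⟩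
    · rintro ⟨i, hi⟩
      induction i using Fin.cases with
      | zero => exact hva.ne hi.symm
      | succ i =>
        rw [Fin.cons_succ] at hi
        exact ha i (hi ▸ hva.symm)
    · rintro ⟨i, rfl⟩
      exact hv i hva
  have hadj i j : G.Adj (f i) (f j) ↔ (P2lP1 ℓ).Adj i j := by
    refine Fin.cases ?_ (Fin.cases ?_ fun i => ?_) i <;>
      refine Fin.cases ?_ (Fin.cases ?_ fun j => ?_) j <;>
      simp [f, hva, hva.symm, hu, hv, ha, hv', ha']
  exact ⟨⟨⟨f, hf⟩, hadj _ _⟩⟩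

lemma InducedFree.card_lt_of_adj {V : Type*} {G : SimpleGraph V} {ℓ : ℕ}
    (hG : InducedFree G (P2lP1 ℓ)) {v a : V} (hva : G.Adj v a) {T : Finset V}
    (hT : G.IsIndepSet T) (hTv : ∀ t ∈ T, ¬ G.Adj v t) (hTa : ∀ t ∈ T, ¬ G.Adj a t) :
    T.card < ℓ := by
  by_contra! hℓT
  obtain ⟨u⟩ : Nonempty (Fin ℓ ↪ T) := Function.Embedding.nonempty_of_card_le (by simpa using hℓT)
  have hmem i : (u i : V) ∈ T := (u i).2
  exact hG.not_isIndContained <| P2lP1.isIndContained_of_adj hva (u.trans (.subtype _))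
    (fun i j h => hT (hmem i) (hmem j) (G.ne_of_adj h) h) (fun i => hTv _ (hmem i))
    (fun i => hTa _ (hmem i))

lemma SimpleGraph.Coloring.exists_adj_apply_eq_of_isEmpty {V α : Type*} {G : SimpleGraph V}
    {v : V} (c : (G.induce {v}ᶜ).Coloring α) (hG : IsEmpty (G.Coloring α)) (i : α) :
    ∃ a, ∃ ha : a ≠ v, G.Adj v a ∧ c ⟨a, ha⟩ = i := by
  by_contra! hi
  classical
  refine hG.false (Coloring.mk (fun w => if hw : w = v then i else c ⟨w, hw⟩) ?_)
  intro x y hxy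
  by_cases hx : x = v <;> by_cases hy : y = v
  · exact (G.ne_of_adj hxy (hx.trans hy.symm)).elim
  · subst hx
    simpa [hy] using (hi y hy hxy).symm
  · subst hy
    simpa [hx] using hi x hx hxy.symm
  · simpa [hx, hy] using c.valid (show (G.induce {v}ᶜ).Adj ⟨x, hx⟩ ⟨y, hy⟩ from hxy)

namespace IsKVertexCritical

variable {V : Type*} {G : SimpleGraph V} {k : ℕ}

lemma colorable_induce_compl (hG : IsKVertexCritical G k) (v : V) :
    (G.induce {v}ᶜ).Colorable (k - 1) := by
  have hlt := hG.2 v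
  cases k with
  | zero => simp at hlt
  | succ k =>
    rw [Nat.cast_succ, ENat.lt_natCast_add_one_iff, chromaticNumber_le_iff_colorable] at hlt
    exact hlt

lemma not_colorable_pred (hG : IsKVertexCritical G k) (v : V) : ¬ G.Colorable (k - 1) := by
  intro hcol
  have hle := hcol.chromaticNumber_le
  rw [hG.1, Nat.cast_le] at hle
  have hk : k ≠ 0 := by
    rintro rfl
    simpa using hG.2 v
  omega

end IsKVertexCritical

open Finset in
lemma IsKVertexCritical.card_le_of_isIndepSet {V : Type*} {G : SimpleGraph V} {k ℓ : ℕ}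
    (hcrit : IsKVertexCritical G k) (hG : InducedFree G (P2lP1 ℓ)) {S : Finset V}
    (hS : G.IsIndepSet S) : #S ≤ (k - 1) * (ℓ - 1) + 1 := by
  classical
  obtain rfl | ⟨v, hv⟩ := S.eq_empty_or_nonempty
  · simp
  obtain ⟨c⟩ := hcrit.colorable_induce_compl v
  have hext : IsEmpty (G.Coloring (Fin (k - 1))) :=
    not_nonempty_iff.1 (hcrit.not_colorable_pred v)
  let S' : Finset ({v}ᶜ : Set V) := S.subtype (· ≠ v)
  have hclass i : #{x ∈ S' | c x = i} ≤ ℓ - 1 := by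
    obtain ⟨a, ha, hva, hai⟩ := c.exists_adj_apply_eq_of_isEmpty hext i
    let T := {x ∈ S' | c x = i}.map (Function.Embedding.subtype _)
    have hT : ∀ t ∈ T, ∃ ht : t ≠ v, t ∈ S ∧ c ⟨t, ht⟩ = i := by
      intro t ht
      obtain ⟨⟨t, htv⟩, hx, rfl⟩ := mem_map.1 ht
      rw [mem_filter] at hx
      exact ⟨htv, mem_subtype.1 hx.1, hx.2⟩
    have hTS : (T : Set V) ⊆ S := fun t ht => (hT t ht).2.1
    have hlt := hG.card_lt_of_adj hva (T := T) (hS.mono hTS)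
      (fun t ht => by
        obtain ⟨htv, htS, -⟩ := hT t ht
        exact hS hv htS (Ne.symm htv))
      (fun t ht hat => by
        obtain ⟨htv, -, hti⟩ := hT t ht
        exact c.valid (show (G.induce {v}ᶜ).Adj ⟨a, ha⟩ ⟨t, htv⟩ from hat) (hai.trans hti.symm))
    rw [card_map] at hlt
    omega
  have hS' : #S' ≤ (ℓ - 1) * (k - 1) := by
    simpa using
      card_le_mul_card_image_of_maps_to (fun x _ => mem_univ (c x)) _ (fun i _ => hclass i)
  have hcard : #S = #S' + 1 := by
    rw [show #S' = #(S.filter (· ≠ v)) from card_subtype _ _, filter_ne', card_erase_add_one hv]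
  rw [hcard, mul_comm]
  omega

theorem finitely_many_vertex_critical_P2lP1_free_general (k ℓ : ℕ) :
    ∃ N : ℕ, ∀ (V : Type) [Fintype V] (G : SimpleGraph V),
      IsKVertexCritical G k → InducedFree G (P2lP1 ℓ) → Fintype.card V ≤ N := by
  classical
  refine ⟨((k - 1) * (ℓ - 1) + 1) * k, fun V _ G hcrit hG => ?_⟩
  obtain ⟨C⟩ := chromaticNumber_le_iff_colorable.1 hcrit.1.le
  have hclass i : G.IsIndepSet ↑({x | C x = i} : Finset V) :=
    (C.isIndepSet_colorClass i).mono fun x hx => by simpa [Coloring.colorClass] using hx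
  simpa using Finset.card_le_mul_card_image_of_maps_to (s := Finset.univ)
    (fun x _ => Finset.mem_univ (C x)) _ (fun i _ => hcrit.card_le_of_isIndepSet hG (hclass i))

theorem finitely_many_vertex_critical_P2lP1_free (k ℓ : ℕ) (hk : 1 ≤ k) (hℓ : 1 ≤ ℓ) :
    ∃ N : ℕ, ∀ (V : Type) [Fintype V] (G : SimpleGraph V),
      IsKVertexCritical G k → InducedFree G (P2lP1 ℓ) → Fintype.card V ≤ N :=
  finitely_many_vertex_critical_P2lP1_free_general k ℓ
end

section
/- A graph G is paw-free if and only if every connected component of G is triangle-free or complete multipartite. -/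
/-!
Paw-freeness is a local condition: a neighbour of a vertex of a triangle is adjacent to a second
vertex of it. For a triangle `abc`, the set of vertices adjacent to `a` or `b` is then closed under
taking neighbours, so in a connected paw-free graph containing a triangle it is everything.
Consequently every vertex lies on a triangle, hence so does every edge `xz`, and then every vertex
is adjacent to `x` or `z`: non-adjacency is transitive. Conversely, a paw lies inside one component,
and its pendant vertex is non-adjacent to two adjacent vertices of its triangle.
-/

open SimpleGraph

/-- A graph is complete multipartite if its vertices can be partitioned into classes such
that two vertices are adjacent exactly when they lie in distinct classes. -/
def IsCompleteMultipartite {W : Type} (G : SimpleGraph W) : Prop :=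
  ∃ (ι : Type) (f : W → ι), ∀ x y : W, G.Adj x y ↔ f x ≠ f y

/-- Paw-freeness in local form: a neighbour of a vertex of a triangle sees another vertex of it. -/
def IsPawFree {V : Type} (G : SimpleGraph V) : Prop :=
  ∀ ⦃a b c d : V⦄, G.Adj a b → G.Adj a c → G.Adj b c → G.Adj c d → G.Adj a d ∨ G.Adj b d

theorem isCompleteMultipartite_iff_isTrans {V : Type} (G : SimpleGraph V) :
    _root_.IsCompleteMultipartite G ↔ G.IsCompleteMultipartite := by
  constructor
  · rintro ⟨ι, f, hf⟩
    refine ⟨fun x y z hxy hyz => ?_⟩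
    simp only [hf, not_not] at hxy hyz ⊢
    exact hxy.trans hyz
  · intro h
    exact ⟨Quotient h.setoid, Quotient.mk h.setoid, fun x y => by
      rw [Ne, Quotient.eq]; exact not_not.symm⟩

theorem inducedFree_iff_not_isIndContained {V W : Type*} (G : SimpleGraph V)
    (H : SimpleGraph W) : InducedFree G H ↔ ¬H ⊴ G := by
  simp only [isIndContained_iff_exists_iso_induce, not_exists, not_nonempty_iff]
  exact forall_congr' fun s =>
    ⟨fun h => ⟨fun e => h.false e.symm⟩, fun h => ⟨fun e => h.false e.symm⟩⟩

theorem paw_isIndContained_of_adj {V : Type} {G : SimpleGraph V} {a b c d : V} (hab : G.Adj a b)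
    (hac : G.Adj a c) (hbc : G.Adj b c) (hcd : G.Adj c d) (had : ¬G.Adj a d)
    (hbd : ¬G.Adj b d) : paw ⊴ G := by
  have hda : a ≠ d := by rintro rfl; exact hbd hab.symm
  have hdb : b ≠ d := by rintro rfl; exact had hab
  have hinj : Function.Injective ![a, b, c, d] := by
    intro i j hij
    fin_cases i <;> fin_cases j <;> simp_all [eq_comm, hab.ne, hac.ne, hbc.ne, hcd.ne]
  have hadj : ∀ i j, G.Adj (![a, b, c, d] i) (![a, b, c, d] j) ↔ paw.Adj i j := by
    intro i j
    fin_cases i <;> fin_cases j <;> simp [paw, hab, hac, hbc, hcd, had, hbd, adj_comm]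
  exact ⟨⟨⟨_, hinj⟩, hadj _ _⟩⟩

theorem inducedFree_paw_iff {V : Type} (G : SimpleGraph V) : InducedFree G paw ↔ IsPawFree G := by
  rw [inducedFree_iff_not_isIndContained]
  refine ⟨fun h a b c d hab hac hbc hcd => ?_, fun h ⟨f⟩ => ?_⟩
  · by_contra! hd
    exact h (paw_isIndContained_of_adj hab hac hbc hcd hd.1 hd.2)
  · have hf (i j : Fin 4) (hij : paw.Adj i j) : G.Adj (f i) (f j) := f.map_rel_iff.mpr hij
    rcases h (hf 0 1 (by simp [paw])) (hf 0 2 (by simp [paw])) (hf 1 2 (by simp [paw]))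
      (hf 2 3 (by simp [paw])) with h03 | h13
    · exact (by simp [paw] : ¬paw.Adj 0 3) (f.map_rel_iff.mp h03)
    · exact (by simp [paw] : ¬paw.Adj 1 3) (f.map_rel_iff.mp h13)

namespace IsPawFree

variable {V : Type} {G : SimpleGraph V}

theorem induce (hG : IsPawFree G) (s : Set V) : IsPawFree (G.induce s) :=
  fun _ _ _ _ hab hac hbc hcd => hG hab hac hbc hcd

theorem of_forall_connectedComponent
    (h : ∀ C : G.ConnectedComponent, IsPawFree (G.induce C.supp)) : IsPawFree G := by
  intro a b c d hab hac hbc hcd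
  have hC := h (G.connectedComponentMk c)
  exact @hC ⟨a, ConnectedComponent.sound hac.reachable⟩ ⟨b, ConnectedComponent.sound hbc.reachable⟩
    ⟨c, rfl⟩ ⟨d, (ConnectedComponent.sound hcd.reachable).symm⟩ hab hac hbc hcd

theorem _root_.isPawFree_iff_forall_connectedComponent :
    IsPawFree G ↔ ∀ C : G.ConnectedComponent, IsPawFree (G.induce C.supp) :=
  ⟨fun hG _ => hG.induce _, of_forall_connectedComponent⟩

theorem of_isCompleteMultipartite (hG : G.IsCompleteMultipartite) : IsPawFree G := by
  intro a b c d hab _ _ _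
  by_contra! h
  exact hG.trans a d b h.1 (fun h' => h.2 h'.symm) hab

theorem of_cliqueFree (hG : G.CliqueFree 3) : IsPawFree G := by
  classical
  exact fun a b c _ hab hac hbc _ => (hG {a, b, c} (is3Clique_triple_iff.mpr ⟨hab, hac, hbc⟩)).elim

section

variable (hG : IsPawFree G) {a b c : V}
include hG

theorem exists_adj_adj_of_adj (hab : G.Adj a b) (hac : G.Adj a c) (hbc : G.Adj b c) {d : V}
    (hcd : G.Adj c d) : ∃ u, G.Adj c u ∧ G.Adj d u := by
  rcases hG hab hac hbc hcd with had | hbd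
  exacts [⟨a, hac.symm, had.symm⟩, ⟨b, hbc.symm, hbd.symm⟩]

theorem adj_or_adj_of_adj (hab : G.Adj a b) (hac : G.Adj a c) (hbc : G.Adj b c) {d y : V}
    (hd : G.Adj a d ∨ G.Adj b d) (hdy : G.Adj d y) : G.Adj a y ∨ G.Adj b y := by
  wlog had : G.Adj a d generalizing a b
  · exact (this hab.symm hbc hac hd.symm (hd.resolve_left had)).symm
  rcases hG hbc hab.symm hac.symm had with hbd | hcd
  · exact hG hab had hbd hdy
  · rcases hG hac had hcd hdy with hay | hcy
    exacts [Or.inl hay, hG hab hac hbc hcy]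

theorem adj_or_adj_of_reachable (hab : G.Adj a b) (hac : G.Adj a c) (hbc : G.Adj b c) {y : V}
    (hy : G.Reachable a y) : G.Adj a y ∨ G.Adj b y := by
  rw [reachable_iff_reflTransGen] at hy
  induction hy with
  | refl => exact Or.inr hab.symm
  | tail _ hdy ih => exact hG.adj_or_adj_of_adj hab hac hbc ih hdy

theorem exists_triangle_of_reachable (hab : G.Adj a b) (hac : G.Adj a c) (hbc : G.Adj b c)
    {x : V} (hx : G.Reachable a x) : ∃ u v, G.Adj x u ∧ G.Adj x v ∧ G.Adj u v := by
  rcases hG.adj_or_adj_of_reachable hab hac hbc hx with hax | hbx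
  · obtain ⟨u, hau, hxu⟩ := hG.exists_adj_adj_of_adj hbc hab.symm hac.symm hax
    exact ⟨a, u, hax.symm, hxu, hau⟩
  · obtain ⟨u, hbu, hxu⟩ := hG.exists_adj_adj_of_adj hac hab hbc.symm hbx
    exact ⟨b, u, hbx.symm, hxu, hbu⟩

theorem isCompleteMultipartite (hconn : G.Preconnected) (hab : G.Adj a b) (hac : G.Adj a c)
    (hbc : G.Adj b c) : G.IsCompleteMultipartite := by
  refine ⟨fun x y z hxy hyz hxz => ?_⟩
  obtain ⟨u, v, hxu, hxv, huv⟩ := hG.exists_triangle_of_reachable hab hac hbc (hconn a x)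
  obtain ⟨w, hxw, hzw⟩ := hG.exists_adj_adj_of_adj huv hxu.symm hxv.symm hxz
  rcases hG.adj_or_adj_of_reachable hxz hxw hzw (hconn x y) with hxy' | hzy
  exacts [hxy hxy', hyz hzy.symm]

end

end IsPawFree

theorem isPawFree_iff_cliqueFree_or_isCompleteMultipartite {V : Type} {G : SimpleGraph V}
    (hconn : G.Preconnected) : IsPawFree G ↔ G.CliqueFree 3 ∨ G.IsCompleteMultipartite := by
  refine ⟨fun hG => or_iff_not_imp_left.mpr fun h => ?_, ?_⟩
  · classical
    obtain ⟨t, ht⟩ := not_forall_not.mp h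
    obtain ⟨a, b, c, hab, hac, hbc, -⟩ := is3Clique_iff.mp ht
    exact hG.isCompleteMultipartite hconn hab hac hbc
  · rintro (h | h)
    exacts [.of_cliqueFree h, .of_isCompleteMultipartite h]

theorem paw_free_iff_components_general {V : Type} (G : SimpleGraph V) :
    InducedFree G paw ↔
      ∀ c : G.ConnectedComponent,
        (G.induce c.supp).CliqueFree 3 ∨ _root_.IsCompleteMultipartite (G.induce c.supp) := by
  rw [inducedFree_paw_iff, isPawFree_iff_forall_connectedComponent]
  refine forall_congr' fun C => ?_
  rw [isCompleteMultipartite_iff_isTrans]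
  exact isPawFree_iff_cliqueFree_or_isCompleteMultipartite C.connected_toSimpleGraph.preconnected

theorem paw_free_iff_components {V : Type} [Fintype V] (G : SimpleGraph V) :
    InducedFree G paw ↔
      ∀ c : G.ConnectedComponent,
        (G.induce c.supp).CliqueFree 3 ∨ _root_.IsCompleteMultipartite (G.induce c.supp) :=
  paw_free_iff_components_general G
end

section
/- Let G and H be graphs each with at least one vertex. The join G ∨ H is k-vertex-critical if and only if there exist k_1, k_2 with k_1 + k_2 = k such that G is k_1-vertex-critical and H is k_2-vertex-critical. -/
/-!
A coloring of `G ∨ H` uses disjoint sets of colors on the two sides, so `χ(G ∨ H) = χ(G) + χ(H)`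
in `ℕ∞`. Deleting a vertex of `G` from the join leaves the join of `G - v` with `H`, so when both
chromatic numbers are finite the join loses a color on every vertex deletion exactly when `G` and
`H` do.
-/

open SimpleGraph

namespace SimpleGraph

variable {α β : Type*} {G : SimpleGraph α} {H : SimpleGraph β}

def joinGInl : G →g joinG G H := ⟨Sum.inl, id⟩

def joinGInr : H →g joinG G H := ⟨Sum.inr, id⟩

lemma Coloring.colorable_of_forall_mem {γ : Type*} (C : G.Coloring γ) (s : Finset γ)
    (h : ∀ v, C v ∈ s) : G.Colorable s.card := by
  simpa using (Coloring.mk (fun v => (⟨C v, h v⟩ : s))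
    fun hvw hc => C.valid hvw (congrArg Subtype.val hc)).colorable

lemma Colorable.joinG_add {n m : ℕ} (hG : G.Colorable n) (hH : H.Colorable m) :
    (joinG G H).Colorable (n + m) := by
  obtain ⟨cG⟩ := hG
  obtain ⟨cH⟩ := hH
  let C : (joinG G H).Coloring (Fin n ⊕ Fin m) :=
    Coloring.mk (Sum.map cG cH) <| by
      rintro (a | a) (b | b) hab
      · exact Sum.inl_injective.ne (cG.valid hab)
      · exact Sum.inl_ne_inr
      · exact Sum.inr_ne_inl
      · exact Sum.inr_injective.ne (cH.valid hab)
  simpa using C.colorable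

lemma Colorable.exists_add_le_of_joinG {n : ℕ} (h : (joinG G H).Colorable n) :
    ∃ a b, a + b ≤ n ∧ G.Colorable a ∧ H.Colorable b := by
  classical
  obtain ⟨C⟩ := h
  let A := Finset.univ.filter fun c => ∃ a, C (Sum.inl a) = c
  let B := Finset.univ.filter fun c => ∃ b, C (Sum.inr b) = c
  have hAB : Disjoint A B := by
    simp only [A, B, Finset.disjoint_filter]
    rintro _ - ⟨a, rfl⟩ ⟨b, hb⟩
    exact C.valid (show (joinG G H).Adj (Sum.inl a) (Sum.inr b) from trivial) hb.symm
  refine ⟨A.card, B.card, ?_, Coloring.colorable_of_forall_mem (C.comp joinGInl) A ?_,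
    Coloring.colorable_of_forall_mem (C.comp joinGInr) B ?_⟩
  · rw [← Finset.card_union_of_disjoint hAB]
    simpa using Finset.card_le_univ (A ∪ B)
  · exact fun a => Finset.mem_filter.mpr ⟨Finset.mem_univ _, a, rfl⟩
  · exact fun b => Finset.mem_filter.mpr ⟨Finset.mem_univ _, b, rfl⟩

lemma chromaticNumber_joinG :
    (joinG G H).chromaticNumber = G.chromaticNumber + H.chromaticNumber := by
  apply le_antisymm
  · cases hG : G.chromaticNumber with
    | top => simp
    | coe a =>
      cases hH : H.chromaticNumber with
      | top => simp
      | coe b =>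
        exact_mod_cast ((chromaticNumber_le_iff_colorable.mp hG.le).joinG_add
          (chromaticNumber_le_iff_colorable.mp hH.le)).chromaticNumber_le
  · cases hJ : (joinG G H).chromaticNumber with
    | top => exact le_top
    | coe n =>
      obtain ⟨a, b, hab, hGa, hHb⟩ :=
        (chromaticNumber_le_iff_colorable.mp hJ.le).exists_add_le_of_joinG
      calc G.chromaticNumber + H.chromaticNumber ≤ a + b :=
            add_le_add hGa.chromaticNumber_le hHb.chromaticNumber_le
        _ ≤ n := by exact_mod_cast hab

def induceJoinGIso (S : Set (α ⊕ β)) :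
    (joinG G H).induce S ≃g joinG (G.induce (Sum.inl ⁻¹' S)) (H.induce (Sum.inr ⁻¹' S)) where
  toEquiv := Equiv.subtypeSum
  map_rel_iff' := by rintro ⟨a | a, ha⟩ ⟨b | b, hb⟩ <;> exact Iff.rfl

lemma chromaticNumber_joinG_induce_compl_inl (v : α) :
    ((joinG G H).induce {Sum.inl v}ᶜ).chromaticNumber =
      (G.induce {v}ᶜ).chromaticNumber + H.chromaticNumber := by
  have hG : Sum.inl ⁻¹' ({Sum.inl v}ᶜ : Set (α ⊕ β)) = {v}ᶜ := by ext; simp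
  have hH : Sum.inr ⁻¹' ({Sum.inl v}ᶜ : Set (α ⊕ β)) = Set.univ := by ext; simp
  rw [chromaticNumber_congr (induceJoinGIso _), chromaticNumber_joinG, hG, hH,
    chromaticNumber_congr (induceUnivIso H)]

lemma chromaticNumber_joinG_induce_compl_inr (w : β) :
    ((joinG G H).induce {Sum.inr w}ᶜ).chromaticNumber =
      G.chromaticNumber + (H.induce {w}ᶜ).chromaticNumber := by
  have hG : Sum.inl ⁻¹' ({Sum.inr w}ᶜ : Set (α ⊕ β)) = Set.univ := by ext; simp
  have hH : Sum.inr ⁻¹' ({Sum.inr w}ᶜ : Set (α ⊕ β)) = {w}ᶜ := by ext; simp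
  rw [chromaticNumber_congr (induceJoinGIso _), chromaticNumber_joinG, hG, hH,
    chromaticNumber_congr (induceUnivIso G)]

def IsVertexCritical {V : Type*} (G : SimpleGraph V) : Prop :=
  ∀ v, (G.induce ({v}ᶜ : Set V)).chromaticNumber < G.chromaticNumber

lemma isKVertexCritical_iff {V : Type*} {G : SimpleGraph V} {k : ℕ} :
    IsKVertexCritical G k ↔ G.chromaticNumber = k ∧ G.IsVertexCritical :=
  and_congr_right fun h => by rw [IsVertexCritical, h]

lemma isVertexCritical_joinG_iff (hG : G.chromaticNumber ≠ ⊤) (hH : H.chromaticNumber ≠ ⊤) :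
    (joinG G H).IsVertexCritical ↔ G.IsVertexCritical ∧ H.IsVertexCritical := by
  simp only [IsVertexCritical, Sum.forall, chromaticNumber_joinG,
    chromaticNumber_joinG_induce_compl_inl, chromaticNumber_joinG_induce_compl_inr,
    ENat.add_lt_add_iff_right hH, ENat.add_lt_add_iff_left hG]

end SimpleGraph

theorem join_vertex_critical_iff_general {α β : Type} (G : SimpleGraph α) (H : SimpleGraph β) (k : ℕ) :
    IsKVertexCritical (joinG G H) k ↔
      ∃ k₁ k₂ : ℕ, k₁ + k₂ = k ∧ IsKVertexCritical G k₁ ∧ IsKVertexCritical H k₂ := by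
  simp only [isKVertexCritical_iff, chromaticNumber_joinG]
  constructor
  · rintro ⟨hk, hJ⟩
    obtain ⟨k₁, k₂, hG, hH, rfl⟩ := WithTop.add_eq_coe.mp hk
    rw [isVertexCritical_joinG_iff (hG ▸ ENat.natCast_ne_top k₁)
      (hH ▸ ENat.natCast_ne_top k₂)] at hJ
    exact ⟨k₁, k₂, rfl, ⟨hG.symm, hJ.1⟩, ⟨hH.symm, hJ.2⟩⟩
  · rintro ⟨k₁, k₂, rfl, ⟨hG, hGc⟩, ⟨hH, hHc⟩⟩
    exact ⟨by rw [hG, hH, Nat.cast_add], (isVertexCritical_joinG_iff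
      (hG ▸ ENat.natCast_ne_top k₁) (hH ▸ ENat.natCast_ne_top k₂)).mpr ⟨hGc, hHc⟩⟩

theorem join_vertex_critical_iff {α β : Type} [Fintype α] [Fintype β]
    [Nonempty α] [Nonempty β] (G : SimpleGraph α) (H : SimpleGraph β) (k : ℕ) :
    IsKVertexCritical (joinG G H) k ↔
      ∃ k₁ k₂ : ℕ, k₁ + k₂ = k ∧ IsKVertexCritical G k₁ ∧ IsKVertexCritical H k₂ :=
  join_vertex_critical_iff_general G H k
end
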